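/- arXiv:2408.06470 — 2 statements merged into one kernel-verified Lean document; each statement's English description precedes it below -/
import Mathlib

section
/- Let X be a real normed space with dual X', K ⊆ X closed convex nonempty, f : K → X' q-coercive with exponent q > 1 and constant α > 0, and Lipschitz on bounded subsets of K. Suppose K_h ⊆ K is a subset, u ∈ K solves the VI f(u)[v − u] ≥ ℓ[v − u] for all v ∈ K, and u_h ∈ K_h solves the same VI restricted to test functions in K_h (with f_h = f). Then there is a constant c > 0 depending only on α, q, and the Lipschitz constant of f on the ball of radius max(‖u‖, ‖u_h‖) intersected with K such that ‖u − u_h‖^q ≤ inf over v_h ∈ K_h of { (2/α)(f(u) − ℓ)[v_h − u] + c‖v_h − u‖^{q'} }, where q' = q/(q−1). -/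
/-- Quasi-optimality estimate for a conforming FE approximation (`K_h ⊆ K`, `f_h = f`)
of a variational inequality with a q-coercive, locally Lipschitz operator. -/
theorem stmt_6 {X : Type*} [NormedAddCommGroup X] [NormedSpace ℝ X]
    (K Kh : Set X) (hK : K.Nonempty) (hKclosed : IsClosed K) (hKconv : Convex ℝ K)
    (hKh : Kh ⊆ K)
    (f : X → (X →L[ℝ] ℝ)) (ℓ : X →L[ℝ] ℝ)
    (q α : ℝ) (hq : 1 < q) (hα : 0 < α)
    (C : ℝ → ℝ)
    (hcoer : ∀ v ∈ K, ∀ w ∈ K, α * ‖v - w‖ ^ q ≤ (f v - f w) (v - w))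
    (hlip : ∀ R : ℝ, ∀ v ∈ K, ∀ w ∈ K, ‖v‖ ≤ R → ‖w‖ ≤ R →
      ‖f v - f w‖ ≤ C R * ‖v - w‖)
    (u uh : X) (hu : u ∈ K) (huh : uh ∈ Kh)
    (hVI : ∀ v ∈ K, ℓ (v - u) ≤ (f u) (v - u))
    (hVIh : ∀ vh ∈ Kh, ℓ (vh - uh) ≤ (f uh) (vh - uh)) :
    ∃ c > 0, ∀ vh ∈ Kh,
      ‖u - uh‖ ^ q ≤
        (2 / α) * (f u - ℓ) (vh - u) + c * ‖vh - u‖ ^ (q / (q - 1)) := by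
  set q' : ℝ := q / (q - 1) with hq'def
  have hpq : q.HolderConjugate q' := Real.HolderConjugate.conjExponent hq
  have hq0 : (0:ℝ) < q := lt_trans one_pos hq
  have hq'0 : (0:ℝ) < q' := hpq.symm.pos
  set R : ℝ := max ‖u‖ ‖uh‖ with hRdef
  set L : ℝ := max (C R) 0 with hLdef
  have hL : 0 ≤ L := le_max_right _ _
  have huhK : uh ∈ K := hKh huh
  -- scaling factor for Young's inequality
  set t : ℝ := (α * q / 2) ^ (1/q) with htdef
  have htpos : 0 < t := Real.rpow_pos_of_pos (by positivity) _
  have htq : t ^ q = α * q / 2 := by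
    rw [htdef, ← Real.rpow_mul (by positivity), one_div,
      inv_mul_cancel₀ (ne_of_gt hq0), Real.rpow_one]
  set c₀ : ℝ := (L / t) ^ q' / q' with hc₀def
  have hc₀ : 0 ≤ c₀ := by
    apply div_nonneg _ (le_of_lt hq'0)
    exact Real.rpow_nonneg (by positivity) _
  refine ⟨2 * c₀ / α + 1, by positivity, ?_⟩
  intro vh hvh
  have hvhK : vh ∈ K := hKh hvh
  set e : X := u - uh with hedef
  set d : X := vh - u with hddef
  -- Lipschitz estimate
  have hfd : (f uh - f u) d ≤ L * ‖e‖ * ‖d‖ := by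
    have h1 : ‖f uh - f u‖ ≤ C R * ‖uh - u‖ :=
      hlip R uh huhK u hu (le_max_right _ _) (le_max_left _ _)
    have h2 : (f uh - f u) d ≤ ‖f uh - f u‖ * ‖d‖ :=
      le_trans (le_abs_self _) ((f uh - f u).le_opNorm d)
    have h3 : ‖uh - u‖ = ‖e‖ := by rw [hedef, ← neg_sub u uh, norm_neg]
    calc (f uh - f u) d ≤ ‖f uh - f u‖ * ‖d‖ := h2
      _ ≤ (C R * ‖uh - u‖) * ‖d‖ := by
          exact mul_le_mul_of_nonneg_right h1 (norm_nonneg _)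
      _ ≤ L * ‖e‖ * ‖d‖ := by
          rw [h3]
          have : C R * ‖e‖ ≤ L * ‖e‖ :=
            mul_le_mul_of_nonneg_right (le_max_left _ _) (norm_nonneg _)
          exact mul_le_mul_of_nonneg_right this (norm_nonneg _)
  -- Young's inequality
  have hyoung : L * ‖e‖ * ‖d‖ ≤ α / 2 * ‖e‖ ^ q + c₀ * ‖d‖ ^ q' := by
    have := Real.young_inequality_of_nonneg
      (mul_nonneg (le_of_lt htpos) (norm_nonneg e))
      (mul_nonneg (by positivity : (0:ℝ) ≤ L / t) (norm_nonneg d)) hpq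
    have ha : (t * ‖e‖) ^ q = t ^ q * ‖e‖ ^ q :=
      Real.mul_rpow (le_of_lt htpos) (norm_nonneg _)
    have hb : (L / t * ‖d‖) ^ q' = (L / t) ^ q' * ‖d‖ ^ q' :=
      Real.mul_rpow (by positivity) (norm_nonneg _)
    have hab : t * ‖e‖ * (L / t * ‖d‖) = L * ‖e‖ * ‖d‖ := by
      field_simp
    rw [hab, ha, hb, htq] at this
    calc L * ‖e‖ * ‖d‖ ≤ α * q / 2 * ‖e‖ ^ q / q + (L / t) ^ q' * ‖d‖ ^ q' / q' := this
      _ = α / 2 * ‖e‖ ^ q + c₀ * ‖d‖ ^ q' := by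
          rw [hc₀def]; field_simp
  -- the basic VI estimate
  have hcoer' : α * ‖e‖ ^ q ≤ (f u - f uh) e := hcoer u hu uh huhK
  have hVI1 : (f u) e ≤ ℓ e := by
    have := hVI uh huhK
    have hh : uh - u = -e := by rw [hedef]; abel
    rw [hh, map_neg, map_neg] at this
    linarith
  have hVI2 : ℓ (vh - uh) ≤ (f uh) (vh - uh) := hVIh vh hvh
  have hkey : α * ‖e‖ ^ q ≤ (f u - ℓ) d + (f uh - f u) d := by
    have hsplit : (f u - f uh) e = f u e - f uh e := by
      simp [ContinuousLinearMap.sub_apply]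
    have hd1 : f uh e = f uh (vh - uh) - f uh d := by
      rw [← map_sub]
      congr 1
      rw [hedef, hddef]; abel
    have hℓ : ℓ e - ℓ (vh - uh) = -(ℓ d) := by
      rw [← map_sub, ← map_neg]
      congr 1
      rw [hedef, hddef]; abel
    have : (f u - f uh) e ≤ ℓ e - ℓ (vh - uh) + f uh d := by
      rw [hsplit, hd1]; linarith
    rw [hℓ] at this
    have hfin : (f u - ℓ) d + (f uh - f u) d = -(ℓ d) + f uh d := by
      simp [ContinuousLinearMap.sub_apply]; ring
    linarith [hcoer', this, hfin.ge, hfin.le]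
  have htotal : α * ‖e‖ ^ q ≤ (f u - ℓ) d + α / 2 * ‖e‖ ^ q + c₀ * ‖d‖ ^ q' := by
    linarith [hkey, hfd, hyoung]
  -- conclude
  have hA : (0:ℝ) ≤ ‖d‖ ^ q' := Real.rpow_nonneg (norm_nonneg _) _
  have h2 : α * (‖e‖ ^ q) ≤
      α * ((2 / α) * (f u - ℓ) d + (2 * c₀ / α + 1) * ‖d‖ ^ q') := by
    have heq : α * ((2 / α) * (f u - ℓ) d + (2 * c₀ / α + 1) * ‖d‖ ^ q')
        = 2 * (f u - ℓ) d + (2 * c₀ + α) * ‖d‖ ^ q' := by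
      field_simp
    rw [heq]
    nlinarith [htotal, hA]
  exact le_of_mul_le_mul_left h2 hα
end

section
/- Cea-type lemma for variational inequalities: under the assumptions of the conforming case (K_h ⊆ K, f_h(u_h)[u_h] = f(u_h)[u_h]), if additionally f(u) = ℓ in X' (e.g. u lies in the interior of K), then ‖u − u_h‖^q ≤ c · inf over v_h ∈ K_h of ‖v_h − u‖^{q'}, with c depending only on α, q, and the local Lipschitz constant of f. -/
/-- Cea-type lemma for variational inequalities: in the conforming case with `f(u) = ℓ`,
the FE error is bounded by the best-approximation error. -/
theorem stmt_7 {X : Type*} [NormedAddCommGroup X] [NormedSpace ℝ X]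
    (K Kh : Set X) (hK : K.Nonempty) (hKclosed : IsClosed K) (hKconv : Convex ℝ K)
    (hKh : Kh ⊆ K)
    (f : X → (X →L[ℝ] ℝ)) (ℓ : X →L[ℝ] ℝ)
    (q α : ℝ) (hq : 1 < q) (hα : 0 < α)
    (C : ℝ → ℝ)
    (hcoer : ∀ v ∈ K, ∀ w ∈ K, α * ‖v - w‖ ^ q ≤ (f v - f w) (v - w))
    (hlip : ∀ R : ℝ, ∀ v ∈ K, ∀ w ∈ K, ‖v‖ ≤ R → ‖w‖ ≤ R →
      ‖f v - f w‖ ≤ C R * ‖v - w‖)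
    (u uh : X) (hu : u ∈ K) (huh : uh ∈ Kh)
    (hVI : ∀ v ∈ K, ℓ (v - u) ≤ (f u) (v - u))
    (hVIh : ∀ vh ∈ Kh, ℓ (vh - uh) ≤ (f uh) (vh - uh))
    (hfu : f u = ℓ) :
    ∃ c > 0, ∀ vh ∈ Kh,
      ‖u - uh‖ ^ q ≤ c * ‖vh - u‖ ^ (q / (q - 1)) := by
  have huhK : uh ∈ K := hKh huh
  set R : ℝ := max ‖u‖ ‖uh‖ with hR
  set L : ℝ := max (C R) 1 with hL
  have hL1 : (1 : ℝ) ≤ L := le_max_right _ _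
  have hL0 : 0 < L := lt_of_lt_of_le one_pos hL1
  have hLα : 0 < L / α := div_pos hL0 hα
  refine ⟨(L / α) ^ (q / (q - 1)), Real.rpow_pos_of_pos hLα _, ?_⟩
  intro vh hvh
  have hvhK : vh ∈ K := hKh hvh
  set E : ℝ := ‖u - uh‖ with hE
  set D : ℝ := ‖vh - u‖ with hD
  have hE0 : 0 ≤ E := norm_nonneg _
  have hD0 : 0 ≤ D := norm_nonneg _
  have hq0 : 0 < q - 1 := by linarith
  have hq'0 : 0 ≤ q / (q - 1) := le_of_lt (div_pos (by linarith) hq0)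
  -- key estimate: α * E ^ q ≤ L * E * D
  have hkey : α * E ^ q ≤ L * E * D := by
    have h1 : α * E ^ q ≤ (f u - f uh) (u - uh) := hcoer u hu uh huhK
    -- (f u - f uh)(u - uh) ≤ (f u - f uh)(u - vh)
    have h2 : (f u - f uh) (u - uh) ≤ (f u - f uh) (u - vh) := by
      have hVIh' := hVIh vh hvh
      have e1 : (f u - f uh) (u - uh) = ℓ (u - uh) - f uh (u - uh) := by
        simp [hfu]
      have e2 : (f u - f uh) (u - vh) = ℓ (u - vh) - f uh (u - vh) := by
        simp [hfu]
      rw [e1, e2]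
      have e3 : ℓ (u - uh) = ℓ (u - vh) + ℓ (vh - uh) := by
        rw [← map_add]; congr 1; abel
      have e4 : f uh (u - uh) = f uh (u - vh) + f uh (vh - uh) := by
        rw [← map_add]; congr 1; abel
      rw [e3, e4]
      linarith
    have h3 : (f u - f uh) (u - vh) ≤ ‖f u - f uh‖ * ‖u - vh‖ := by
      calc (f u - f uh) (u - vh) ≤ ‖(f u - f uh) (u - vh)‖ := le_abs_self _
        _ ≤ ‖f u - f uh‖ * ‖u - vh‖ := (f u - f uh).le_opNorm _
    have h4 : ‖f u - f uh‖ ≤ L * E := by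
      have := hlip R u hu uh huhK (le_max_left _ _) (le_max_right _ _)
      calc ‖f u - f uh‖ ≤ C R * ‖u - uh‖ := this
        _ ≤ L * E := by
            apply mul_le_mul_of_nonneg_right (le_max_left _ _) hE0
    have h5 : ‖f u - f uh‖ * ‖u - vh‖ ≤ L * E * D := by
      have : ‖u - vh‖ = D := by rw [hD, norm_sub_rev]
      rw [this]
      exact mul_le_mul_of_nonneg_right h4 hD0
    linarith
  rcases eq_or_lt_of_le hE0 with hE0' | hEpos
  · rw [← hE0', Real.zero_rpow (by positivity)]
    positivity
  · -- divide by α * E : E ^ (q-1) ≤ (L/α) * D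
    have hEq : E ^ q = E * E ^ (q - 1) := by
      rw [← Real.rpow_one_add' (le_of_lt hEpos) (by linarith)]
      ring_nf
    have h6 : E ^ (q - 1) ≤ (L / α) * D := by
      rw [hEq] at hkey
      rw [div_mul_eq_mul_div, le_div_iff₀ hα]
      nlinarith [hkey]
    have h7 : (E ^ (q - 1)) ^ (q / (q - 1)) ≤ ((L / α) * D) ^ (q / (q - 1)) :=
      Real.rpow_le_rpow (Real.rpow_nonneg hE0 _) h6 hq'0
    have h8 : (E ^ (q - 1)) ^ (q / (q - 1)) = E ^ q := by
      rw [← Real.rpow_mul hE0, mul_div_cancel₀ _ (ne_of_gt hq0)]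
    have h9 : ((L / α) * D) ^ (q / (q - 1))
        = (L / α) ^ (q / (q - 1)) * D ^ (q / (q - 1)) :=
      Real.mul_rpow (le_of_lt hLα) hD0
    calc E ^ q = (E ^ (q - 1)) ^ (q / (q - 1)) := h8.symm
      _ ≤ ((L / α) * D) ^ (q / (q - 1)) := h7
      _ = (L / α) ^ (q / (q - 1)) * D ^ (q / (q - 1)) := h9
end
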